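/- arXiv:1606.03366 — 9 statements merged into one kernel-verified Lean document; each statement's English description precedes it below -/
import Mathlib

section
/- The consent rule f^{(1,1)} is immune to group control by adding individuals: if S ⊆ T ⊆ N and S ⊄ f^{(1,1)}(φ,T), then for every U ⊆ N \ T we have S ⊄ f^{(1,1)}(φ, T ∪ U). -/
open Finset

variable {N : Type*} [DecidableEq N] [Fintype N]

/-- Consent rule `f^{(s,t)}`: `a ∈ T` with `φ a a = 1` is socially qualified iff at least
`s` members of `T` qualify her; `a` with `φ a a = 0` is socially qualified iff fewer than
`t` members of `T` disqualify her. -/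
def consent (s t : ℕ) (φ : N → N → Bool) (T : Finset N) : Finset N :=
  T.filter (fun a =>
    if φ a a = true then s ≤ (T.filter (fun b => φ b a = true)).card
    else (T.filter (fun b => φ b a = false)).card < t)

/-- One expansion step: add every member of `T` qualified by someone currently included. -/
def qstep (φ : N → N → Bool) (T K : Finset N) : Finset N :=
  K ∪ T.filter (fun a => ∃ b ∈ K, φ b a = true)

/-- Initial set for the liberal-start-respecting rule. -/
def K0L (φ : N → N → Bool) (T : Finset N) : Finset N :=
  T.filter (fun a => φ a a = true)

/-- Initial set for the consensus-start-respecting rule. -/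
def K0C (φ : N → N → Bool) (T : Finset N) : Finset N :=
  T.filter (fun a => ∀ b ∈ T, φ b a = true)

/-- Liberal-start-respecting rule (fixed point reached after `T.card` steps). -/
def fLSR (φ : N → N → Bool) (T : Finset N) : Finset N :=
  (qstep φ T)^[T.card] (K0L φ T)

/-- Consensus-start-respecting rule (fixed point reached after `T.card` steps). -/
def fCSR (φ : N → N → Bool) (T : Finset N) : Finset N :=
  (qstep φ T)^[T.card] (K0C φ T)


lemma mem_consent11 (φ : N → N → Bool) (T : Finset N) (a : N) :
    a ∈ consent 1 1 φ T ↔ a ∈ T ∧ φ a a = true := by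
  simp only [consent, Finset.mem_filter]
  constructor
  · rintro ⟨hT, h⟩
    refine ⟨hT, ?_⟩
    by_contra hf
    rw [if_neg hf] at h
    have : a ∈ T.filter (fun b => φ b a = false) := by
      simp [hT, Bool.not_eq_true] at hf ⊢; exact hf
    have := Finset.card_pos.mpr ⟨a, this⟩
    omega
  · rintro ⟨hT, h⟩
    refine ⟨hT, ?_⟩
    simp only [h, if_true]
    have : a ∈ T.filter (fun b => φ b a = true) := by simp [hT, h]
    exact Finset.card_pos.mpr ⟨a, this⟩

theorem stmt1 (φ : N → N → Bool) (S T U : Finset N) (hST : S ⊆ T)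
    (hS : ¬ S ⊆ consent 1 1 φ T) (hU : U ⊆ Finset.univ \ T) :
    ¬ S ⊆ consent 1 1 φ (T ∪ U) := by
  intro hsub
  apply hS
  intro a ha
  have h := hsub ha
  rw [mem_consent11] at h
  rw [mem_consent11]
  exact ⟨hST ha, h.2⟩
end

section
/- The consent rule f^{(1,1)} is immune to group control by deleting individuals: if S ⊆ N and S ⊄ f^{(1,1)}(φ,N), then for every U ⊆ N \ S we have S ⊄ f^{(1,1)}(φ, N \ U). -/
open Finset

variable {N : Type*} [DecidableEq N] [Fintype N]

/- Every member of `T` counts among her own qualifiers or disqualifiers, so with both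
thresholds equal to `1` her own opinion decides. -/
theorem consent_one_one_eq_filter {α : Type*} (φ : α → α → Bool) (T : Finset α) :
    consent 1 1 φ T = T.filter (fun a => φ a a = true) := by
  refine filter_congr fun a ha => ?_
  cases hφ : φ a a
  · have self_disqualifies : (T.filter (fun b => φ b a = false)).Nonempty :=
      ⟨a, mem_filter.2 ⟨ha, hφ⟩⟩
    simpa [Nat.lt_one_iff, card_eq_zero] using self_disqualifies.ne_empty
  · have self_qualifies : (T.filter (fun b => φ b a = true)).Nonempty :=
      ⟨a, mem_filter.2 ⟨ha, hφ⟩⟩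
    simpa [Nat.one_le_iff_ne_zero, card_eq_zero] using self_qualifies.ne_empty

theorem consent_one_one_mono {α : Type*} (φ : α → α → Bool) {T T' : Finset α} (h : T ⊆ T') :
    consent 1 1 φ T ⊆ consent 1 1 φ T' := by
  simpa only [consent_one_one_eq_filter] using filter_subset_filter _ h

theorem stmt2_general (φ : N → N → Bool) (S U : Finset N)
    (hS : ¬ S ⊆ consent 1 1 φ Finset.univ) :
    ¬ S ⊆ consent 1 1 φ (Finset.univ \ U) :=
  fun h => hS (h.trans (consent_one_one_mono φ (subset_univ _)))

theorem stmt2 (φ : N → N → Bool) (S U : Finset N)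
    (hS : ¬ S ⊆ consent 1 1 φ Finset.univ) (hU : U ⊆ Finset.univ \ S) :
    ¬ S ⊆ consent 1 1 φ (Finset.univ \ U) :=
  stmt2_general φ S U hS
end

section
/- For every s ≥ 2, the consent rule f^{(s,1)} is immune to group control by deleting individuals: if S ⊆ N and S ⊄ f^{(s,1)}(φ,N), then for every V ⊆ N with S ⊆ V we have S ⊄ f^{(s,1)}(φ,V). -/
open Finset

variable {N : Type*} [DecidableEq N] [Fintype N]

theorem stmt3 (s : ℕ) (hs : 2 ≤ s) (φ : N → N → Bool) (S V : Finset N)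
    (hS : ¬ S ⊆ consent s 1 φ Finset.univ) (hSV : S ⊆ V) :
    ¬ S ⊆ consent s 1 φ V := by
  intro h
  apply hS
  intro a ha
  have haV : a ∈ consent s 1 φ V := h ha
  simp only [consent, mem_filter] at haV ⊢
  obtain ⟨haV', hcond⟩ := haV
  refine ⟨mem_univ a, ?_⟩
  by_cases hφ : φ a a = true
  · simp only [hφ, if_true] at hcond ⊢
    calc s ≤ (V.filter (fun b => φ b a = true)).card := hcond
    _ ≤ (univ.filter (fun b => φ b a = true)).card := by
        apply card_le_card
        exact filter_subset_filter _ (subset_univ V)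
  · simp only [hφ, if_false] at hcond
    exfalso
    have : a ∈ V.filter (fun b => φ b a = false) := by
      simp [haV', Bool.eq_false_iff.mpr hφ]
    rw [Nat.lt_one_iff, card_eq_zero] at hcond
    rw [hcond] at this
    exact notMem_empty a this
end

section
/- For every s ≥ 2, the consent rule f^{(s,1)} is immune to group control by partitioning: if S ⊆ N and S ⊄ f^{(s,1)}(φ,N), then for every U ⊆ N, letting V = f^{(s,1)}(φ,U) ∪ f^{(s,1)}(φ,N\U), we have S ⊄ f^{(s,1)}(φ,V). -/
open Finset

variable {N : Type*} [DecidableEq N] [Fintype N]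

theorem stmt4 (s : ℕ) (hs : 2 ≤ s) (φ : N → N → Bool) (S U : Finset N)
    (hS : ¬ S ⊆ consent s 1 φ Finset.univ) :
    ¬ S ⊆ consent s 1 φ (consent s 1 φ U ∪ consent s 1 φ (Finset.univ \ U)) := by
  rw [Finset.not_subset] at hS ⊢
  obtain ⟨a, haS, ha⟩ := hS
  refine ⟨a, haS, ?_⟩
  intro haV
  rw [consent, mem_filter] at haV ha
  push_neg at ha
  by_cases hφ : φ a a = true
  · simp only [hφ, if_true] at haV ha
    have h1 := ha (mem_univ a)
    have h2 : ((consent s 1 φ U ∪ consent s 1 φ (Finset.univ \ U)).filter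
        (fun b => φ b a = true)).card ≤ ((Finset.univ : Finset N).filter
        (fun b => φ b a = true)).card :=
      card_le_card (filter_subset_filter _ (subset_univ _))
    exact h1 (le_trans haV.2 h2)
  · have h2 := haV.2
    rw [if_neg hφ] at h2
    have hmem : a ∈ (consent s 1 φ U ∪ consent s 1 φ (Finset.univ \ U)).filter
        (fun b => φ b a = false) :=
      mem_filter.mpr ⟨haV.1, by simpa using hφ⟩
    have hc : 0 < _ := card_pos.mpr ⟨a, hmem⟩
    omega
end

section
/- For every t ≥ 2, the consent rule f^{(1,t)} is immune to group control by adding individuals: if S ⊆ T ⊆ N and S ⊄ f^{(1,t)}(φ,T), then for every U ⊆ N \ T we have S ⊄ f^{(1,t)}(φ, T ∪ U). -/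
open Finset

variable {N : Type*} [DecidableEq N] [Fintype N]

theorem stmt5 (t : ℕ) (ht : 2 ≤ t) (φ : N → N → Bool) (S T U : Finset N)
    (hST : S ⊆ T) (hS : ¬ S ⊆ consent 1 t φ T) (hU : U ⊆ Finset.univ \ T) :
    ¬ S ⊆ consent 1 t φ (T ∪ U) := by
  obtain ⟨a, haS, haC⟩ := not_subset.mp hS
  have haT : a ∈ T := hST haS
  intro h
  apply haC
  simp only [consent, mem_filter] at *
  refine ⟨haT, ?_⟩
  by_cases hd : φ a a = true
  · simp only [hd, if_true]
    exact card_pos.mpr ⟨a, mem_filter.mpr ⟨haT, hd⟩⟩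
  · simp only [hd, if_false]
    have h2 := (mem_filter.mp (h haS)).2
    simp only [hd, if_false] at h2
    calc (T.filter (fun b => φ b a = false)).card
        ≤ ((T ∪ U).filter (fun b => φ b a = false)).card :=
          card_le_card (filter_subset_filter _ subset_union_left)
      _ < t := h2
end

section
/- The liberal-start-respecting rule f^{LSR} is immune to group control by deleting individuals: for every V ⊆ N and a ∈ V, if a ∉ f^{LSR}(φ,N) then a ∉ f^{LSR}(φ,V). Consequently, if S ⊄ f^{LSR}(φ,N) then S ⊄ f^{LSR}(φ,V) for every V ⊆ N. -/
open Finset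

variable {N : Type*} [DecidableEq N] [Fintype N]

lemma qstep_mono (φ : N → N → Bool) {T T' K K' : Finset N} (hT : T ⊆ T') (hK : K ⊆ K') :
    qstep φ T K ⊆ qstep φ T' K' := by
  intro x hx
  simp only [qstep, mem_union, mem_filter] at hx ⊢
  rcases hx with h | ⟨hxT, b, hb, hφ⟩
  · exact Or.inl (hK h)
  · exact Or.inr ⟨hT hxT, b, hK hb, hφ⟩

lemma iter_mono (φ : N → N → Bool) {T T' K K' : Finset N} (hT : T ⊆ T') (hK : K ⊆ K') :
    ∀ n, (qstep φ T)^[n] K ⊆ (qstep φ T')^[n] K' := by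
  intro n
  induction n generalizing K K' with
  | zero => simpa using hK
  | succ n ih =>
    rw [Function.iterate_succ_apply, Function.iterate_succ_apply]
    exact ih (qstep_mono φ hT hK)

lemma subset_qstep (φ : N → N → Bool) (T K : Finset N) : K ⊆ qstep φ T K :=
  Finset.subset_union_left

lemma subset_iter (φ : N → N → Bool) (T K : Finset N) (n : ℕ) :
    K ⊆ (qstep φ T)^[n] K := by
  induction n generalizing K with
  | zero => simp
  | succ n ih =>
    rw [Function.iterate_succ_apply]
    exact (subset_qstep φ T K).trans (ih _)

lemma qstep_subset_T (φ : N → N → Bool) {T K : Finset N} (hK : K ⊆ T) :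
    qstep φ T K ⊆ T := by
  intro x hx
  simp only [qstep, mem_union, mem_filter] at hx
  rcases hx with h | ⟨h, _⟩
  · exact hK h
  · exact h

lemma iter_subset_T (φ : N → N → Bool) {T K : Finset N} (hK : K ⊆ T) (n : ℕ) :
    (qstep φ T)^[n] K ⊆ T := by
  induction n generalizing K with
  | zero => simpa
  | succ n ih =>
    rw [Function.iterate_succ_apply]
    exact ih (qstep_subset_T φ hK)

lemma fLSR_subset_univ (φ : N → N → Bool) (V : Finset N) :
    fLSR φ V ⊆ fLSR φ Finset.univ := by
  have h1 : fLSR φ V ⊆ (qstep φ Finset.univ)^[V.card] (K0L φ Finset.univ) := by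
    apply iter_mono φ (subset_univ V)
    intro x hx
    simp only [K0L, mem_filter] at hx ⊢
    exact ⟨mem_univ x, hx.2⟩
  have hc : V.card ≤ (Finset.univ : Finset N).card := card_le_card (subset_univ V)
  have h2 : (qstep φ Finset.univ)^[V.card] (K0L φ Finset.univ) ⊆ fLSR φ Finset.univ := by
    unfold fLSR
    obtain ⟨k, hk⟩ := Nat.exists_eq_add_of_le hc
    rw [hk, Nat.add_comm, Function.iterate_add_apply]
    exact subset_iter φ _ _ k
  exact h1.trans h2

theorem stmt10 (φ : N → N → Bool) :
    (∀ (V : Finset N) (a : N), a ∈ V → a ∉ fLSR φ Finset.univ → a ∉ fLSR φ V) ∧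
    (∀ S : Finset N, ¬ S ⊆ fLSR φ Finset.univ → ∀ V : Finset N, ¬ S ⊆ fLSR φ V) := by
  constructor
  · intro V a _ hna hmem
    exact hna (fLSR_subset_univ φ V hmem)
  · intro S hS V hSV
    exact hS (hSV.trans (fLSR_subset_univ φ V))
end

section
/- Correctness of the GCDI algorithm for f^{CSR} (sufficiency direction): let U ⊆ N \ S with S ⊆ f^{CSR}(φ, N \ U), let K_0 be the set of individuals in N\U qualified by everyone in N\U, and suppose K_0 is nonempty. Then for any b ∈ K_0, letting D(b) = {a' ∈ N : φ(a',b)=0}, we have D(b) ⊆ U and S ⊆ f^{CSR}(φ, N \ D(b)). -/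
open Finset

variable {N : Type*} [DecidableEq N] [Fintype N]

lemma qstep_subset (φ : N → N → Bool) {T K : Finset N} (h : K ⊆ T) : qstep φ T K ⊆ T :=
  Finset.union_subset h (Finset.filter_subset _ _)

lemma iter_subset (φ : N → N → Bool) {T K : Finset N} (h : K ⊆ T) (n : ℕ) :
    (qstep φ T)^[n] K ⊆ T := by
  induction n with
  | zero => exact h
  | succ n ih => rw [Function.iterate_succ_apply']; exact qstep_subset φ ih

lemma iter_fixed (φ : N → N → Bool) {T K : Finset N} (h : K ⊆ T) :
    qstep φ T ((qstep φ T)^[T.card] K) = (qstep φ T)^[T.card] K := by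
  set g := qstep φ T with hg
  have claim : ∀ m : ℕ, (∃ k ≤ m, g (g^[k] K) = g^[k] K) ∨ m ≤ (g^[m] K).card := by
    intro m
    induction m with
    | zero => exact Or.inr (Nat.zero_le _)
    | succ m ih =>
      rcases ih with ⟨k, hk, hfix⟩ | hcard
      · exact Or.inl ⟨k, hk.trans (Nat.le_succ m), hfix⟩
      · by_cases hf : g (g^[m] K) = g^[m] K
        · exact Or.inl ⟨m, Nat.le_succ m, hf⟩
        · right
          rw [Function.iterate_succ_apply']
          have hss : g^[m] K ⊂ g (g^[m] K) :=
            (subset_qstep φ T _).ssubset_of_ne (Ne.symm hf)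
          exact Nat.succ_le_of_lt (lt_of_le_of_lt hcard (Finset.card_lt_card hss))
  rcases claim T.card with ⟨k, hk, hfix⟩ | hcard
  · have : g^[T.card] K = g^[k] K := by
      have := Function.iterate_fixed hfix (T.card - k)
      rw [← Function.iterate_add_apply, Nat.sub_add_cancel hk] at this
      exact this
    rw [this, hfix]
  · have hsub : g^[T.card] K ⊆ T := iter_subset φ h T.card
    have heq : g^[T.card] K = T := Finset.eq_of_subset_of_card_le hsub hcard
    rw [heq]
    exact Finset.Subset.antisymm (qstep_subset φ subset_rfl) (subset_qstep φ T T)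

lemma fCSR_fixed (φ : N → N → Bool) (T : Finset N) :
    qstep φ T (fCSR φ T) = fCSR φ T :=
  iter_fixed φ (Finset.filter_subset _ _)

theorem stmt14 (φ : N → N → Bool) (S U : Finset N) (hU : U ⊆ Finset.univ \ S)
    (hsol : S ⊆ fCSR φ (Finset.univ \ U))
    (b : N) (hb : b ∈ K0C φ (Finset.univ \ U)) :
    Finset.univ.filter (fun a' => φ a' b = false) ⊆ U ∧
    S ⊆ fCSR φ (Finset.univ \ Finset.univ.filter (fun a' => φ a' b = false)) := by
  set T := Finset.univ \ U with hT
  set D := Finset.univ.filter (fun a' => φ a' b = false) with hD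
  set T' := Finset.univ \ D with hT'
  simp only [K0C, Finset.mem_filter] at hb
  obtain ⟨hbT, hqual⟩ := hb
  -- Part 1 : D ⊆ U
  have hDU : D ⊆ U := by
    intro a ha
    simp only [hD, Finset.mem_filter, Finset.mem_univ, true_and] at ha
    by_contra haU
    have haT : a ∈ T := by simp [hT, haU]
    have h1 := hqual a haT
    rw [h1] at ha
    exact absurd ha (by simp)
  refine ⟨hDU, ?_⟩
  -- T ⊆ T'
  have hTT' : T ⊆ T' := by
    intro a ha
    simp only [hT, Finset.mem_sdiff] at ha
    simp only [hT', Finset.mem_sdiff, Finset.mem_univ, true_and]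
    exact fun hd => ha.2 (hDU hd)
  -- b ∈ K0C φ T'
  have hbT' : b ∈ T' := hTT' hbT
  have hbK : b ∈ K0C φ T' := by
    simp only [K0C, Finset.mem_filter]
    refine ⟨hbT', fun c hc => ?_⟩
    simp only [hT', Finset.mem_sdiff, hD, Finset.mem_filter, Finset.mem_univ, true_and] at hc
    exact eq_true_of_ne_false hc
  -- b ∈ fCSR φ T'
  have hbF : b ∈ fCSR φ T' := subset_iter φ T' (K0C φ T') T'.card hbK
  -- K0C φ T ⊆ fCSR φ T'
  have hK0 : K0C φ T ⊆ fCSR φ T' := by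
    intro a ha
    simp only [K0C, Finset.mem_filter] at ha
    have : a ∈ qstep φ T' (fCSR φ T') :=
      Finset.mem_union_right _ (Finset.mem_filter.2 ⟨hTT' ha.1, b, hbF, ha.2 b hbT⟩)
    rwa [fCSR_fixed] at this
  -- iterate stays inside fCSR φ T'
  have hiter : ∀ n, (qstep φ T)^[n] (K0C φ T) ⊆ fCSR φ T' := by
    intro n
    induction n with
    | zero => exact hK0
    | succ n ih =>
      rw [Function.iterate_succ_apply']
      intro a ha
      have : a ∈ qstep φ T' (fCSR φ T') := qstep_mono φ hTT' ih ha
      rwa [fCSR_fixed] at this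
  exact hsol.trans (hiter T.card)
end

section
/- Correctness of the GCDI algorithm for f^{(s,2)}: let L̄ = {a ∈ S : φ(a,a)=0}, U_a = {a' ∈ N\S : φ(a',a)=0} for a ∈ L̄, and U = ⋃_{a ∈ L̄} U_a. Then there exists U' ⊆ N\S with |U'| ≤ k and S ⊆ f^{(s,2)}(φ, N\U') if and only if |U| ≤ k and S ⊆ f^{(s,2)}(φ, N\U). -/
open Finset

variable {N : Type*} [DecidableEq N] [Fintype N]

theorem stmt15 (s k : ℕ) (hs : 1 ≤ s) (hk : 1 ≤ k) (φ : N → N → Bool)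
    (S : Finset N) (hSne : S.Nonempty) (U : Finset N)
    (hUdef : U = (S.filter (fun a => φ a a = false)).biUnion
      (fun a => (Finset.univ \ S).filter (fun b => φ b a = false))) :
    (∃ U' ⊆ Finset.univ \ S, U'.card ≤ k ∧ S ⊆ consent s 2 φ (Finset.univ \ U')) ↔
      U.card ≤ k ∧ S ⊆ consent s 2 φ (Finset.univ \ U) := by
  have hUS : U ⊆ Finset.univ \ S := by
    subst hUdef
    intro b hb
    simp only [mem_biUnion, mem_filter] at hb
    obtain ⟨a, _, hb, _⟩ := hb
    exact hb
  constructor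
  · rintro ⟨U', hU'sub, hU'card, hSsub⟩
    -- a ∈ S implies a ∉ U'
    have haU' : ∀ a ∈ S, a ∉ U' := fun a ha hmem => by
      have := hU'sub hmem
      simp only [mem_sdiff, mem_univ, true_and] at this
      exact this ha
    have hUU' : U ⊆ U' := by
      subst hUdef
      intro b hb
      simp only [mem_biUnion, mem_filter, mem_sdiff, mem_univ, true_and] at hb
      obtain ⟨a, ⟨haS, haf⟩, hbS, hbf⟩ := hb
      by_contra hbU'
      have haq := hSsub haS
      simp only [consent, mem_filter, haf, Bool.false_eq_true, if_false, mem_sdiff,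
        mem_univ, true_and] at haq
      obtain ⟨_, hcard⟩ := haq
      have h2 : 1 < ((Finset.univ \ U').filter (fun b => φ b a = false)).card := by
        rw [Finset.one_lt_card]
        refine ⟨a, ?_, b, ?_, fun h => hbS (h ▸ haS)⟩
        · simp [mem_filter, mem_sdiff, haU' a haS, haf]
        · simp [mem_filter, mem_sdiff, hbU', hbf]
      omega
    refine ⟨le_trans (Finset.card_le_card hUU') hU'card, ?_⟩
    intro a haS
    have haU : a ∉ U := fun h => by
      have := hUS h; simp only [mem_sdiff, mem_univ, true_and] at this; exact this haS
    have haq := hSsub haS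
    simp only [consent, mem_filter, mem_sdiff, mem_univ, true_and] at haq ⊢
    obtain ⟨haT', hq⟩ := haq
    refine ⟨haU, ?_⟩
    by_cases hφa : φ a a = true
    · simp only [hφa, if_true] at hq ⊢
      refine le_trans hq (Finset.card_le_card ?_)
      apply Finset.filter_subset_filter
      intro x hx
      simp only [mem_sdiff, mem_univ, true_and] at hx ⊢
      exact fun h => hx (hUU' h)
    · rw [Bool.not_eq_true] at hφa
      simp only [hφa, Bool.false_eq_true, if_false] at hq ⊢
      have hsub : ((Finset.univ \ U).filter (fun b => φ b a = false)) ⊆ {a} := by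
        intro b hb
        simp only [mem_filter, mem_sdiff, mem_univ, true_and] at hb
        obtain ⟨hbU, hbf⟩ := hb
        by_cases hbS : b ∈ S
        · -- b ∈ S ⊆ univ \ U', so b is a disqualifier of a in univ \ U'
          have hb' : b ∈ (Finset.univ \ U').filter (fun b => φ b a = false) := by
            simp [mem_filter, mem_sdiff, haU' b hbS, hbf]
          have ha' : a ∈ (Finset.univ \ U').filter (fun b => φ b a = false) := by
            simp [mem_filter, mem_sdiff, haU' a haS, hφa]
          have hle : ((Finset.univ \ U').filter (fun b => φ b a = false)).card ≤ 1 := by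
            omega
          rw [Finset.card_le_one] at hle
          simp [hle b hb' a ha']
        · exfalso
          apply hbU
          subst hUdef
          simp only [mem_biUnion, mem_filter, mem_sdiff, mem_univ, true_and]
          exact ⟨a, ⟨haS, hφa⟩, hbS, hbf⟩
      have := Finset.card_le_card hsub
      simp only [Finset.card_singleton] at this
      omega
  · rintro ⟨hcard, hsub⟩
    exact ⟨U, hUS, hcard, hsub⟩
end

section
/- Susceptibility of f^{(s,t)} with t ≥ 2 to partition control: let N = {a_1,…,a_{t+1}} with φ(a_i,a_j)=0 for all i,j, and S = {a_1}. Then f^{(s,t)}(φ,N) = ∅, and for U = {a_1}: f^{(s,t)}(φ,U) = {a_1}, f^{(s,t)}(φ,N\U) = ∅, and S ⊆ f^{(s,t)}(φ, f^{(s,t)}(φ,U) ∪ f^{(s,t)}(φ,N\U)). -/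
open Finset

variable {N : Type*} [DecidableEq N] [Fintype N]

lemma consent_allfalse (s t : ℕ) {n : ℕ} (φ : Fin n → Fin n → Bool)
    (hφ : ∀ i j, φ i j = false) (T : Finset (Fin n)) :
    consent s t φ T = if T.card < t then T else ∅ := by
  unfold consent
  split
  · next h =>
    rw [Finset.filter_true_of_mem]
    intro a _
    simp [hφ]
    exact h
  · next h =>
    rw [Finset.filter_false_of_mem]
    intro a _
    simp [hφ]
    omega

theorem stmt17 (s t : ℕ) (hs : 1 ≤ s) (ht : 2 ≤ t)
    (φ : Fin (t + 1) → Fin (t + 1) → Bool) (hφ : ∀ i j, φ i j = false) :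
    consent s t φ (Finset.univ : Finset (Fin (t + 1))) = ∅ ∧
    consent s t φ ({0} : Finset (Fin (t + 1))) = {0} ∧
    consent s t φ (Finset.univ \ {0}) = ∅ ∧
    ({0} : Finset (Fin (t + 1))) ⊆
      consent s t φ (consent s t φ {0} ∪ consent s t φ (Finset.univ \ {0})) := by
  have hcardu : (Finset.univ : Finset (Fin (t+1))).card = t + 1 := by simp
  have h1 : consent s t φ (Finset.univ : Finset (Fin (t + 1))) = ∅ := by
    rw [consent_allfalse s t φ hφ]; rw [if_neg]; omega
  have h2 : consent s t φ ({0} : Finset (Fin (t + 1))) = {0} := by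
    rw [consent_allfalse s t φ hφ]; rw [if_pos] <;> simp <;> omega
  have h3 : consent s t φ (Finset.univ \ {0}) = ∅ := by
    rw [consent_allfalse s t φ hφ]; rw [if_neg]
    rw [Finset.card_sdiff_of_subset (by simp)]; simp
  refine ⟨h1, h2, h3, ?_⟩
  rw [h2, h3, Finset.union_empty, h2]
end
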